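/- If d is a divisor of degree 2g − 2 on a connected weightless loopless multigraph G of genus g, then r_G(d) ≤ g − 1, and r_G(d) = g − 1 if and only if d is linearly equivalent to the canonical divisor k_G. -/

import Mathlib

open Finset

section Preliminaries

variable {V : Type} [Fintype V] [DecidableEq V]

/-- The degree of a divisor on a graph with vertex set `V`. -/
def degDiv (d : V → ℤ) : ℤ := ∑ v, d v

/-- A divisor is effective if it is nonnegative at every vertex. -/
def Effective (d : V → ℤ) : Prop := ∀ v, 0 ≤ d v

/-- The principal divisor `t_Z` associated to a subset `Z` of vertices, for the
graph with edge multiplicity function `m`. -/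
def tZ (m : V → V → ℕ) (Z : Finset V) : V → ℤ := fun v =>
  if v ∈ Z then -(∑ u ∈ Zᶜ, (m v u : ℤ)) else ∑ u ∈ Z, (m v u : ℤ)

/-- Two divisors are linearly equivalent if their difference lies in the subgroup
generated by the divisors `t_Z`. -/
def LinEquiv (m : V → V → ℕ) (d d' : V → ℤ) : Prop :=
  d - d' ∈ AddSubgroup.closure (Set.range (tZ m))

/-- The simple graph associated to an edge multiplicity function `m`
(an edge between distinct `u`, `v` whenever `m u v > 0`; loops are discarded). -/
def assocGraph (m : V → V → ℕ) : SimpleGraph V where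
  Adj u v := u ≠ v ∧ (0 < m u v ∨ 0 < m v u)
  symm := ⟨fun _ _ h => ⟨h.1.symm, h.2.symm⟩⟩
  loopless := ⟨fun _ h => h.1 rfl⟩

end Preliminaries

section Rank

variable {V : Type} [Fintype V] [DecidableEq V]

/-- The set of integers `k` such that either `k = -1`, or `k ≥ 0` and for every
effective divisor `e` of degree `k`, the divisor `d - e` is linearly equivalent
to an effective divisor. -/
def bnRankSet (m : V → V → ℕ) (d : V → ℤ) : Set ℤ :=
  {k : ℤ | k = -1 ∨ (0 ≤ k ∧ ∀ e : V → ℤ, Effective e → degDiv e = k →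
      ∃ f : V → ℤ, Effective f ∧ LinEquiv m (d - e) f)}

/-- The Baker–Norine rank of a divisor `d` on the weightless loopless multigraph
with edge multiplicity function `m`. -/
noncomputable def bnRank (m : V → V → ℕ) (d : V → ℤ) : ℤ := sSup (bnRankSet m d)

end Rank

section Genus

variable {V : Type} [Fintype V] [DecidableEq V]

/-- The genus of a weightless loopless multigraph: `|E| - |V| + 1` where
`|E| = (1/2) ∑_{u,v} m u v`. -/
def genus (m : V → V → ℕ) : ℤ :=
  (∑ u, ∑ v, (m u v : ℤ)) / 2 - Fintype.card V + 1

/-- The canonical divisor of a weightless loopless multigraph: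
`k_G(v) = val(v) - 2`. -/
def canonical (m : V → V → ℕ) : V → ℤ := fun v => (∑ u, (m v u : ℤ)) - 2

end Genus

/-!
Following Baker–Norine. For an injective ordering `ρ` of the vertices let `ν_ρ(v)` be the number
of edges from `v` to earlier vertices, minus one. Then `deg ν_ρ = g - 1`, `K - ν_ρ` is `ν` of the
reversed ordering, and `ν_ρ` is not equivalent to an effective divisor: if `ν_ρ - Δc ≥ 0`, look
at the `ρ`-first minimum of `c`. Conversely, running Dhar's burning algorithm on a `q`-reduced
representative of a divisor `D` shows that `D` or some `ν_ρ - D` is equivalent to an effective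
divisor. So divisors of degree at least `g` are equivalent to effective ones, and one of degree
`g - 1` that is not is equivalent to some `ν_ρ`. If `r(d) ≥ g`, subtracting from `d` an effective
divisor equivalent to `d - ν_ρ + n q` of degree `r(d)` would make `ν_ρ` effective; `d ~ K` gives
`r(d) ≥ g - 1` because `K - e ~ ν_ρ` would force `e ~ ν_ρ'`; and if `d ≁ K`, the dichotomy for
`K - d` gives an effective `f` of degree `g - 1` with `d - f ~ ν_ρ'`, so `r(d) < g - 1`.
-/

variable {V : Type} [Fintype V] {m : V → V → ℕ}

def laplacian (m : V → V → ℕ) : (V → ℤ) →+ (V → ℤ) where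
  toFun c v := ∑ u, (m v u : ℤ) * (c u - c v)
  map_zero' := by ext; simp
  map_add' c c' := by
    ext v; simp only [Pi.add_apply, ← sum_add_distrib]; exact sum_congr rfl fun u _ => by ring

lemma laplacian_apply (c : V → ℤ) (v : V) :
    laplacian m c v = ∑ u, (m v u : ℤ) * (c u - c v) := rfl

lemma laplacian_one : laplacian m 1 = 0 := by
  ext v; simp [laplacian_apply]

lemma laplacian_dotProduct (hsymm : ∀ u v, m u v = m v u) (a b : V → ℤ) :
    laplacian m a ⬝ᵥ b = a ⬝ᵥ laplacian m b := by
  simp only [dotProduct, laplacian_apply, sum_mul, mul_sum, mul_sub, sub_mul, sum_sub_distrib]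
  congr 1
  · rw [sum_comm]
    exact sum_congr rfl fun v _ => sum_congr rfl fun u _ => by rw [hsymm]; ring
  · exact sum_congr rfl fun v _ => sum_congr rfl fun u _ => by ring

lemma degDiv_add (a b : V → ℤ) : degDiv (a + b) = degDiv a + degDiv b := sum_add_distrib

lemma degDiv_sub (a b : V → ℤ) : degDiv (a - b) = degDiv a - degDiv b := sum_sub_distrib ..

lemma degDiv_laplacian (hsymm : ∀ u v, m u v = m v u) (c : V → ℤ) :
    degDiv (laplacian m c) = 0 := by
  have := laplacian_dotProduct hsymm c 1
  rwa [dotProduct_one, laplacian_one, dotProduct_zero] at this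

lemma Effective.degDiv_nonneg {f : V → ℤ} (hf : Effective f) : 0 ≤ degDiv f :=
  sum_nonneg fun v _ => hf v

lemma Effective.eq_zero_of_degDiv_eq_zero {f : V → ℤ} (hf : Effective f) (h : degDiv f = 0) :
    f = 0 := by
  ext v
  exact (sum_eq_zero_iff_of_nonneg fun u _ => hf u).1 h v (mem_univ v)

/-- Baker–Norine's divisor `ν_ρ` of the vertex ordering `ρ`. -/
def orderDivisor (m : V → V → ℕ) (ρ : V → ℕ) : V → ℤ :=
  fun v => (∑ u with ρ u < ρ v, (m v u : ℤ)) - 1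

omit [Fintype V] in
lemma cast_mult_eq_ite_add_ite (hloop : ∀ v, m v v = 0) {ρ : V → ℕ} (hρ : Function.Injective ρ)
    (v u : V) :
    (m v u : ℤ) =
      (if ρ u < ρ v then (m v u : ℤ) else 0) + if ρ v < ρ u then (m v u : ℤ) else 0 := by
  rcases lt_trichotomy (ρ u) (ρ v) with h | h | h
  · simp [h, h.not_gt]
  · simp [hρ h, hloop]
  · simp [h, h.not_gt]

lemma sum_sum_mult_eq_two_mul (hsymm : ∀ u v, m u v = m v u) (hloop : ∀ v, m v v = 0)
    {ρ : V → ℕ} (hρ : Function.Injective ρ) :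
    ∑ u, ∑ v, (m u v : ℤ) = 2 * ∑ v, ∑ u with ρ u < ρ v, (m v u : ℤ) := by
  have hback : ∑ v, ∑ u, (if ρ v < ρ u then (m v u : ℤ) else 0) =
      ∑ v, ∑ u, if ρ u < ρ v then (m v u : ℤ) else 0 := by
    rw [sum_comm]
    simp_rw [hsymm]
  simp_rw [sum_filter]
  conv_lhs => enter [2, v, 2, u]; rw [cast_mult_eq_ite_add_ite hloop hρ v u]
  simp_rw [sum_add_distrib]
  rw [hback]
  ring

lemma degDiv_orderDivisor (hsymm : ∀ u v, m u v = m v u) (hloop : ∀ v, m v v = 0)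
    {ρ : V → ℕ} (hρ : Function.Injective ρ) : degDiv (orderDivisor m ρ) = genus m - 1 := by
  rw [genus, sum_sum_mult_eq_two_mul hsymm hloop hρ, Int.mul_ediv_cancel_left _ two_ne_zero]
  simp [degDiv, orderDivisor, sum_sub_distrib]

lemma exists_orderDivisor_eq_canonical_sub (hloop : ∀ v, m v v = 0) {ρ : V → ℕ}
    (hρ : Function.Injective ρ) :
    ∃ ρ' : V → ℕ,
      Function.Injective ρ' ∧ canonical m - orderDivisor m ρ = orderDivisor m ρ' := by
  have hle : ∀ v, ρ v ≤ univ.sup ρ := fun v => le_sup (mem_univ v)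
  have hrev : ∀ u v, univ.sup ρ - ρ u < univ.sup ρ - ρ v ↔ ρ v < ρ u := fun u v => by
    have := hle u; have := hle v; omega
  refine ⟨fun v => univ.sup ρ - ρ v, fun u v h => hρ ?_, ?_⟩
  · have := hle u; have := hle v; simp only at h; omega
  ext v
  simp only [canonical, orderDivisor, Pi.sub_apply, hrev]
  conv_lhs => enter [1, 1, 2, u]; rw [cast_mult_eq_ite_add_ite hloop hρ v u]
  simp only [sum_add_distrib, sum_filter]
  ring

lemma degDiv_canonical (hsymm : ∀ u v, m u v = m v u) (hloop : ∀ v, m v v = 0) :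
    degDiv (canonical m) = 2 * genus m - 2 := by
  obtain ⟨ρ, hρ⟩ := Countable.exists_injective_nat V
  obtain ⟨ρ', hρ', hKν⟩ := exists_orderDivisor_eq_canonical_sub hloop hρ
  rw [← sub_add_cancel (canonical m) (orderDivisor m ρ), hKν, degDiv_add,
    degDiv_orderDivisor hsymm hloop hρ, degDiv_orderDivisor hsymm hloop hρ']
  ring

lemma SimpleGraph.Reachable.exists_adj_dist_lt {α : Type*} {G : SimpleGraph α} {v q : α}
    (h : G.Reachable v q) (hv : v ≠ q) : ∃ u, G.Adj v u ∧ G.dist u q < G.dist v q := by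
  obtain ⟨p, hp⟩ := h.exists_walk_length_eq_dist
  cases p with
  | nil => exact absurd rfl hv
  | cons hadj p => exact ⟨_, hadj, (SimpleGraph.dist_le p).trans_lt (by simp [← hp])⟩

/-- Witness: `(W + 1) ^ (N - dist v q)`, where `W` bounds every valence, so that at `v ≠ q` the
edge to a neighbour closer to `q` outweighs all the other edges at `v`. -/
lemma exists_potential (hsymm : ∀ u v, m u v = m v u) (hconn : (assocGraph m).Connected)
    (q : V) :
    ∃ w : V → ℤ, (∀ v, w v ≤ w q) ∧ ∀ v ≠ q, 1 ≤ laplacian m w v := by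
  set G := assocGraph m
  set W : ℤ := ∑ u, ∑ v, (m u v : ℤ)
  set N := univ.sup fun v => G.dist v q
  set w : V → ℤ := fun v => (W + 1) ^ (N - G.dist v q) with hw
  have hW : 0 ≤ W := by positivity
  have hval : ∀ v, ∑ u, (m v u : ℤ) ≤ W := fun v =>
    single_le_sum (f := fun v => ∑ u, (m v u : ℤ)) (fun _ _ => by positivity) (mem_univ v)
  have hw0 : ∀ v, 0 ≤ w v := fun v => by positivity
  refine ⟨w, fun v => pow_le_pow_right₀ (by omega) (by simp), fun v hv => ?_⟩
  obtain ⟨u, ⟨-, hadj⟩, hdist⟩ := (hconn.preconnected v q).exists_adj_dist_lt hv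
  have hmu : (1 : ℤ) ≤ m v u := by
    have : 0 < m v u := hadj.elim id fun h => hsymm v u ▸ h
    omega
  have hwu : (W + 1) * w v ≤ w u := by
    have : G.dist v q ≤ N := le_sup (f := fun v => G.dist v q) (mem_univ v)
    rw [hw, ← pow_succ']
    exact pow_le_pow_right₀ (by omega) (by omega)
  calc (1 : ℤ) ≤ w v := one_le_pow₀ (by omega)
    _ = (W + 1) * w v - W * w v := by ring
    _ ≤ m v u * w u - (∑ x, (m v x : ℤ)) * w v := by
        have := le_mul_of_one_le_left (hw0 u) hmu
        have := mul_le_mul_of_nonneg_right (hval v) (hw0 v)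
        linarith
    _ ≤ ∑ x, (m v x : ℤ) * w x - (∑ x, (m v x : ℤ)) * w v := by
        gcongr
        exact single_le_sum (f := fun x => (m v x : ℤ) * w x) (fun x _ => by positivity)
          (mem_univ u)
    _ = laplacian m w v := by simp only [laplacian_apply, mul_sub, sum_sub_distrib, sum_mul]

lemma dotProduct_le_degDiv_mul {D w : V → ℤ} {q : V} (hD : ∀ v ≠ q, 0 ≤ D v)
    (hwq : ∀ v, w v ≤ w q) : D ⬝ᵥ w ≤ degDiv D * w q := by
  rw [degDiv, sum_mul]
  refine sum_le_sum fun v _ => ?_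
  rcases eq_or_ne v q with rfl | hv
  · rfl
  · exact mul_le_mul_of_nonneg_left (hwq v) (hD v hv)

variable [DecidableEq V]

lemma degDiv_single (q : V) (k : ℤ) : degDiv (Pi.single q k) = k := by
  simp [degDiv]

lemma tZ_eq_laplacian (Z : Finset V) :
    tZ m Z = laplacian m (fun v => if v ∈ Z then 1 else 0) := by
  ext v
  rw [laplacian_apply, ← sum_compl_add_sum Z]
  by_cases hv : v ∈ Z
  · rw [sum_eq_zero (s := Z) fun u hu => by simp [hu, hv], add_zero, tZ, if_pos hv,
      ← sum_neg_distrib]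
    exact sum_congr rfl fun u hu => by simp [mem_compl.1 hu, hv]
  · rw [sum_eq_zero (s := Zᶜ) fun u hu => by simp [mem_compl.1 hu, hv], zero_add, tZ,
      if_neg hv]
    exact sum_congr rfl fun u hu => by simp [hu, hv]

lemma closure_range_tZ_eq_range_laplacian :
    AddSubgroup.closure (Set.range (tZ m)) = (laplacian m).range := by
  apply le_antisymm
  · rw [AddSubgroup.closure_le]
    rintro _ ⟨Z, rfl⟩
    exact ⟨_, (tZ_eq_laplacian Z).symm⟩
  · rintro _ ⟨c, rfl⟩
    rw [← univ_sum_single c, map_sum]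
    refine AddSubgroup.sum_mem _ fun v _ => ?_
    have hsingle : (Pi.single v (c v) : V → ℤ) =
        c v • fun u => if u ∈ ({v} : Finset V) then 1 else 0 := by
      ext u; by_cases hu : u = v <;> simp [hu]
    rw [hsingle, map_zsmul, ← tZ_eq_laplacian]
    exact zsmul_mem (AddSubgroup.subset_closure (Set.mem_range_self _)) _

lemma linEquiv_iff_exists_laplacian {d d' : V → ℤ} :
    LinEquiv m d d' ↔ ∃ c, laplacian m c = d - d' := by
  rw [LinEquiv, closure_range_tZ_eq_range_laplacian]; rfl

lemma LinEquiv.refl (m : V → V → ℕ) (d : V → ℤ) : LinEquiv m d d := by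
  simp [LinEquiv, zero_mem]

lemma LinEquiv.symm {d d' : V → ℤ} (h : LinEquiv m d d') : LinEquiv m d' d := by
  simpa [LinEquiv] using neg_mem h

lemma LinEquiv.trans {a b c : V → ℤ} (h : LinEquiv m a b) (h' : LinEquiv m b c) :
    LinEquiv m a c := by
  simpa [LinEquiv] using add_mem h h'

lemma LinEquiv.of_sub_eq {a b c d : V → ℤ} (h : LinEquiv m a b) (e : c - d = a - b) :
    LinEquiv m c d := by
  rwa [LinEquiv, e]

lemma linEquiv_add_laplacian (d c : V → ℤ) : LinEquiv m (d + laplacian m c) d :=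
  linEquiv_iff_exists_laplacian.2 ⟨c, by abel⟩

lemma LinEquiv.degDiv_eq (hsymm : ∀ u v, m u v = m v u) {d d' : V → ℤ} (h : LinEquiv m d d') :
    degDiv d = degDiv d' := by
  obtain ⟨c, hc⟩ := linEquiv_iff_exists_laplacian.1 h
  have := degDiv_laplacian hsymm c
  rw [hc, degDiv_sub] at this
  omega

def LinEquivEffective (m : V → V → ℕ) (d : V → ℤ) : Prop :=
  ∃ f, Effective f ∧ LinEquiv m d f

lemma Effective.linEquivEffective {f : V → ℤ} (hf : Effective f) : LinEquivEffective m f :=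
  ⟨f, hf, .refl m f⟩

lemma LinEquivEffective.of_linEquiv {d d' : V → ℤ} (h : LinEquivEffective m d')
    (hd : LinEquiv m d d') : LinEquivEffective m d :=
  let ⟨f, hf, hf'⟩ := h
  ⟨f, hf, hd.trans hf'⟩

lemma LinEquivEffective.add {d d' : V → ℤ} (h : LinEquivEffective m d)
    (h' : LinEquivEffective m d') : LinEquivEffective m (d + d') := by
  obtain ⟨f, hf, hdf⟩ := h
  obtain ⟨f', hf', hdf'⟩ := h'
  refine ⟨f + f', fun v => add_nonneg (hf v) (hf' v), ?_⟩
  simpa [LinEquiv, add_sub_add_comm] using add_mem hdf hdf'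

lemma LinEquivEffective.degDiv_nonneg (hsymm : ∀ u v, m u v = m v u) {d : V → ℤ}
    (h : LinEquivEffective m d) : 0 ≤ degDiv d :=
  let ⟨_, hf, hdf⟩ := h
  (hdf.degDiv_eq hsymm).symm ▸ hf.degDiv_nonneg

lemma LinEquivEffective.linEquiv_zero (hsymm : ∀ u v, m u v = m v u) {d : V → ℤ}
    (h : LinEquivEffective m d) (h0 : degDiv d = 0) : LinEquiv m d 0 := by
  obtain ⟨f, hf, hdf⟩ := h
  rwa [← hf.eq_zero_of_degDiv_eq_zero (hdf.degDiv_eq hsymm ▸ h0)]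

theorem not_linEquivEffective_orderDivisor [Nonempty V] (ρ : V → ℕ) :
    ¬ LinEquivEffective m (orderDivisor m ρ) := by
  rintro ⟨f, hf, hνf⟩
  obtain ⟨c, hc⟩ := linEquiv_iff_exists_laplacian.1 hνf
  obtain ⟨v₀, -, hv₀⟩ := exists_min_image univ c univ_nonempty
  obtain ⟨v, hv, hvρ⟩ := exists_min_image {u | c u = c v₀} ρ ⟨v₀, by simp⟩
  have hcv : ∀ u, c v ≤ c u := fun u => (mem_filter.1 hv).2 ▸ hv₀ u (mem_univ u)
  -- `v` minimises `c` and is `ρ`-first among the minimisers, so `c v < c u` when `ρ u < ρ v`.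
  have hearlier : ∑ u with ρ u < ρ v, (m v u : ℤ) ≤ laplacian m c v := by
    rw [laplacian_apply, sum_filter]
    refine sum_le_sum fun u _ => ?_
    split_ifs with hu
    · have hne : c u ≠ c v := fun h =>
        (hvρ u (by simp [h, (mem_filter.1 hv).2])).not_gt hu
      have : 1 ≤ c u - c v := by have := hcv u; omega
      nlinarith
    · exact mul_nonneg (Int.natCast_nonneg _) (sub_nonneg.2 (hcv u))
  have hcv' := congrFun hc v
  simp only [Pi.sub_apply, orderDivisor] at hcv'
  have := hf v
  omega

lemma exists_linEquiv_nonneg_of_potential {w : V → ℤ} {q : V}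
    (hw : ∀ v ≠ q, 1 ≤ laplacian m w v) (D : V → ℤ) :
    ∃ D', LinEquiv m D D' ∧ ∀ v ≠ q, 0 ≤ D' v := by
  set c := ∑ u, |D u|
  refine ⟨D + laplacian m (c • w), (linEquiv_add_laplacian D _).symm, fun v hv => ?_⟩
  have hDc : -D v ≤ c := (neg_le_abs _).trans
    (single_le_sum (f := fun u => |D u|) (fun _ _ => abs_nonneg _) (mem_univ v))
  have hc : 0 ≤ c := sum_nonneg fun _ _ => abs_nonneg _
  have := mul_le_mul_of_nonneg_left (hw v hv) hc
  simp only [map_zsmul, Pi.add_apply, Pi.smul_apply, smul_eq_mul]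
  linarith

lemma tZ_dotProduct (hsymm : ∀ u v, m u v = m v u) (B : Finset V) (w : V → ℤ) :
    tZ m B ⬝ᵥ w = ∑ v ∈ B, laplacian m w v := by
  rw [tZ_eq_laplacian, laplacian_dotProduct hsymm]
  simp [dotProduct, ite_mul, sum_ite_mem]

def IsReducedAt (m : V → V → ℕ) (q : V) (D : V → ℤ) : Prop :=
  (∀ v ≠ q, 0 ≤ D v) ∧
    ∀ B : Finset V, B.Nonempty → q ∉ B → ∃ v ∈ B, D v < ∑ u ∈ Bᶜ, (m v u : ℤ)

/-- Among the divisors equivalent to `D` and effective away from `q`, one maximising the pairing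
with a potential peaked at `q` is reduced: firing a set avoiding `q` raises the pairing. -/
theorem exists_linEquiv_isReducedAt (hsymm : ∀ u v, m u v = m v u)
    (hconn : (assocGraph m).Connected) (D : V → ℤ) (q : V) :
    ∃ D', LinEquiv m D D' ∧ IsReducedAt m q D' := by
  obtain ⟨w, hwq, hw⟩ := exists_potential hsymm hconn q
  set T : Set (V → ℤ) := {D' | LinEquiv m D D' ∧ ∀ v ≠ q, 0 ≤ D' v}
  have hbdd : ∃ b, ∀ z, (∃ D' ∈ T, D' ⬝ᵥ w = z) → z ≤ b := by
    refine ⟨degDiv D * w q, ?_⟩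
    rintro _ ⟨D', ⟨hDD', hD'⟩, rfl⟩
    exact hDD'.degDiv_eq hsymm ▸ dotProduct_le_degDiv_mul hD' hwq
  have hne : ∃ z, ∃ D' ∈ T, D' ⬝ᵥ w = z :=
    let ⟨D', hD'⟩ := exists_linEquiv_nonneg_of_potential hw D
    ⟨_, D', hD', rfl⟩
  obtain ⟨_, ⟨D', hD', rfl⟩, hmax⟩ := Int.exists_greatest_of_bdd hbdd hne
  refine ⟨D', hD'.1, hD'.2, fun B hB hqB => ?_⟩
  by_contra! hstuck
  have hfire : D' + tZ m B ∈ T := by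
    have hfired : LinEquiv m (D' + tZ m B) D' := tZ_eq_laplacian B ▸ linEquiv_add_laplacian D' _
    refine ⟨hD'.1.trans hfired.symm, fun v hv => ?_⟩
    by_cases hvB : v ∈ B
    · simpa [tZ, hvB] using hstuck v hvB
    · have : 0 ≤ tZ m B v := by simp only [tZ, hvB, if_false]; positivity
      simpa using add_nonneg (hD'.2 v hv) this
  have hgain : 0 < tZ m B ⬝ᵥ w := by
    rw [tZ_dotProduct hsymm]
    exact sum_pos (fun v hv => by have := hw v (ne_of_mem_of_not_mem hv hqB); omega) hB
  have := hmax _ ⟨_, hfire, rfl⟩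
  rw [add_dotProduct] at this
  omega

/-- Dhar's burning algorithm: a fire started at `q` can spread through `A` in the order `ρ`. -/
def Burnable (m : V → V → ℕ) (D : V → ℤ) (q : V) (A : Finset V) : Prop :=
  q ∈ A ∧ ∃ ρ : V → ℕ, Set.InjOn ρ A ∧
    ∀ v ∈ A, v ≠ q → D v < ∑ u ∈ A with ρ u < ρ v, (m v u : ℤ)

omit [Fintype V] in
lemma Burnable.insert {D : V → ℤ} {q v : V} {A : Finset V} (hA : Burnable m D q A)
    (hvA : v ∉ A) (hv : D v < ∑ u ∈ A, (m v u : ℤ)) : Burnable m D q (insert v A) := by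
  obtain ⟨hq, ρ, hinj, hburn⟩ := hA
  have hlt : ∀ a ∈ A, ρ a < A.sup ρ + 1 := fun a ha => Nat.lt_succ_of_le (le_sup ha)
  set ρ' := Function.update ρ v (A.sup ρ + 1)
  have hρ' : ∀ a ∈ A, ρ' a = ρ a := fun a ha =>
    Function.update_of_ne (ne_of_mem_of_not_mem ha hvA) _ _
  have hρ'v : ρ' v = A.sup ρ + 1 := Function.update_self ..
  refine ⟨mem_insert_of_mem hq, ρ', ?_, fun x hx hxq => ?_⟩
  · rw [coe_insert, Set.injOn_insert (by simpa using hvA)]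
    refine ⟨fun a ha b hb h => hinj ha hb (by rwa [hρ' a ha, hρ' b hb] at h), ?_⟩
    rintro ⟨a, ha, h⟩
    have := hlt a ha
    rw [hρ' a ha, hρ'v] at h
    omega
  rw [filter_insert]
  rcases mem_insert.1 hx with rfl | hxA
  · rwa [if_neg (lt_irrefl _), filter_true_of_mem fun u hu => hρ' u hu ▸ hρ'v ▸ hlt u hu]
  · rw [if_neg (by rw [hρ'v, hρ' x hxA]; exact (hlt x hxA).not_gt),
      filter_congr fun u hu => by rw [hρ' u hu, hρ' x hxA]]
    exact hburn x hxA hxq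

lemma IsReducedAt.exists_order {D : V → ℤ} {q : V} (hD : IsReducedAt m q D) :
    ∃ ρ : V → ℕ, Function.Injective ρ ∧ ∀ v ≠ q, D v < ∑ u with ρ u < ρ v, (m v u : ℤ) := by
  classical
  obtain ⟨A, hAmem, hmax⟩ := exists_max_image {A | Burnable m D q A} card
    ⟨{q}, by simpa using ⟨mem_singleton_self q, fun _ => 0, by simp⟩⟩
  have hA : Burnable m D q A := (mem_filter.1 hAmem).2
  obtain rfl : A = univ := by
    by_contra hAu
    obtain ⟨w, hw⟩ : ∃ w, w ∉ A := by
      by_contra!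
      exact hAu (eq_univ_of_forall this)
    obtain ⟨v, hv, hvD⟩ := hD.2 Aᶜ ⟨w, mem_compl.2 hw⟩ (by simpa using hA.1)
    rw [compl_compl] at hvD
    have := hmax _ (by simpa using hA.insert (mem_compl.1 hv) hvD)
    rw [card_insert_of_notMem (mem_compl.1 hv)] at this
    omega
  obtain ⟨-, ρ, hinj, hburn⟩ := hA
  exact ⟨ρ, fun u v h => hinj (mem_univ u) (mem_univ v) h,
    fun v hv => hburn v (mem_univ v) hv⟩

theorem linEquivEffective_or_orderDivisor_sub (hsymm : ∀ u v, m u v = m v u)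
    (hconn : (assocGraph m).Connected) (D : V → ℤ) :
    LinEquivEffective m D ∨
      ∃ ρ : V → ℕ, Function.Injective ρ ∧ LinEquivEffective m (orderDivisor m ρ - D) := by
  obtain ⟨q⟩ := hconn.nonempty
  obtain ⟨D', hDD', hred⟩ := exists_linEquiv_isReducedAt hsymm hconn D q
  by_cases hq : 0 ≤ D' q
  · exact .inl ⟨D', fun v => (eq_or_ne v q).elim (· ▸ hq) (hred.1 v), hDD'⟩
  obtain ⟨ρ, hρ, hburn⟩ := hred.exists_order
  refine .inr ⟨ρ, hρ, orderDivisor m ρ - D', fun v => ?_, hDD'.symm.of_sub_eq (by abel)⟩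
  have : 0 ≤ ∑ u with ρ u < ρ v, (m v u : ℤ) := by positivity
  rcases eq_or_ne v q with rfl | hv
  · simp only [Pi.sub_apply, orderDivisor]
    omega
  · have := hburn v hv
    simp only [Pi.sub_apply, orderDivisor]
    omega

section Consequences

variable (hsymm : ∀ u v, m u v = m v u) (hloop : ∀ v, m v v = 0)
  (hconn : (assocGraph m).Connected)
include hsymm hloop hconn

lemma degDiv_le_of_not_linEquivEffective {D : V → ℤ} (hD : ¬ LinEquivEffective m D) :
    degDiv D ≤ genus m - 1 := by
  obtain ⟨ρ, hρ, hνD⟩ := (linEquivEffective_or_orderDivisor_sub hsymm hconn D).resolve_left hD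
  have := hνD.degDiv_nonneg hsymm
  rw [degDiv_sub, degDiv_orderDivisor hsymm hloop hρ] at this
  omega

lemma genus_nonneg : 0 ≤ genus m := by
  obtain ⟨q⟩ := hconn.nonempty
  have := degDiv_le_of_not_linEquivEffective hsymm hloop hconn (D := Pi.single q (-1))
    fun h => by simpa [degDiv_single] using h.degDiv_nonneg hsymm
  rw [degDiv_single] at this
  omega

lemma linEquivEffective_of_genus_le_degDiv {D : V → ℤ} (hD : genus m ≤ degDiv D) :
    LinEquivEffective m D := by
  by_contra h
  have := degDiv_le_of_not_linEquivEffective hsymm hloop hconn h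
  omega

lemma exists_linEquiv_orderDivisor {D : V → ℤ} (hdeg : degDiv D = genus m - 1)
    (hD : ¬ LinEquivEffective m D) :
    ∃ ρ : V → ℕ, Function.Injective ρ ∧ LinEquiv m D (orderDivisor m ρ) := by
  obtain ⟨ρ, hρ, hνD⟩ := (linEquivEffective_or_orderDivisor_sub hsymm hconn D).resolve_left hD
  have hν0 := hνD.linEquiv_zero hsymm
    (by rw [degDiv_sub, degDiv_orderDivisor hsymm hloop hρ, hdeg, sub_self])
  exact ⟨ρ, hρ, hν0.symm.of_sub_eq (by abel)⟩

lemma LinEquivEffective.canonical_sub {D : V → ℤ} (hdeg : degDiv D = genus m - 1)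
    (hD : LinEquivEffective m D) : LinEquivEffective m (canonical m - D) := by
  by_contra h
  obtain ⟨ρ, hρ, hKD⟩ := exists_linEquiv_orderDivisor hsymm hloop hconn
    (by rw [degDiv_sub, degDiv_canonical hsymm hloop, hdeg]; ring) h
  obtain ⟨ρ', -, hρ'⟩ := exists_orderDivisor_eq_canonical_sub hloop hρ
  have := hconn.nonempty
  apply not_linEquivEffective_orderDivisor ρ'
  rw [← hρ']
  exact hD.of_linEquiv (hKD.of_sub_eq (by abel))

lemma le_genus_sub_one_of_mem_bnRankSet {d : V → ℤ} (hdeg : degDiv d ≤ 2 * genus m - 2)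
    {k : ℤ} (hk : k ∈ bnRankSet m d) : k ≤ genus m - 1 := by
  rcases hk with rfl | ⟨-, hk⟩
  · have := genus_nonneg hsymm hloop hconn
    omega
  by_contra! hgk
  obtain ⟨q⟩ := hconn.nonempty
  obtain ⟨ρ, hρ⟩ := Countable.exists_injective_nat V
  set δ : V → ℤ := Pi.single q (k - degDiv d + genus m - 1)
  have hδ : Effective δ := fun v => by
    rcases eq_or_ne v q with rfl | hv
    · simp only [δ, Pi.single_eq_same]; omega
    · simp [δ, hv]
  obtain ⟨e, he, hEe⟩ := linEquivEffective_of_genus_le_degDiv hsymm hloop hconn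
    (D := d - orderDivisor m ρ + δ)
    (by rw [degDiv_add, degDiv_sub, degDiv_orderDivisor hsymm hloop hρ, degDiv_single]; omega)
  have hedeg : degDiv e = k := by
    rw [← hEe.degDiv_eq hsymm, degDiv_add, degDiv_sub, degDiv_orderDivisor hsymm hloop hρ,
      degDiv_single]
    ring
  have := hconn.nonempty
  exact not_linEquivEffective_orderDivisor ρ (LinEquivEffective.of_linEquiv
    (LinEquivEffective.add (hk e he hedeg) hδ.linEquivEffective) (hEe.symm.of_sub_eq (by abel)))

lemma genus_sub_one_mem_bnRankSet {d : V → ℤ} (hd : LinEquiv m d (canonical m)) :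
    genus m - 1 ∈ bnRankSet m d := by
  rcases (genus_nonneg hsymm hloop hconn).eq_or_lt with h | h
  · exact .inl (by omega)
  refine .inr ⟨by omega, fun e he hdeg => ?_⟩
  exact (he.linEquivEffective.canonical_sub hsymm hloop hconn hdeg).of_linEquiv
    (hd.of_sub_eq (by abel))

lemma linEquiv_canonical_of_genus_sub_one_mem_bnRankSet {d : V → ℤ}
    (hdeg : degDiv d = 2 * genus m - 2) (hmem : genus m - 1 ∈ bnRankSet m d) :
    LinEquiv m d (canonical m) := by
  by_contra hdK
  have hKd : ¬ LinEquivEffective m (canonical m - d) := fun h => by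
    have h0 := h.linEquiv_zero hsymm
      (by rw [degDiv_sub, degDiv_canonical hsymm hloop, hdeg, sub_self])
    exact hdK (h0.symm.of_sub_eq (by abel))
  obtain ⟨ρ, hρ, f, hf, hνf⟩ :=
    (linEquivEffective_or_orderDivisor_sub hsymm hconn _).resolve_left hKd
  have hfdeg : degDiv f = genus m - 1 := by
    rw [← hνf.degDiv_eq hsymm, degDiv_sub, degDiv_sub, degDiv_orderDivisor hsymm hloop hρ,
      degDiv_canonical hsymm hloop, hdeg]
    ring
  rcases hmem with h | ⟨-, hmem⟩
  · have := hf.degDiv_nonneg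
    omega
  obtain ⟨ρ', -, hρ'⟩ := exists_orderDivisor_eq_canonical_sub hloop hρ
  have := hconn.nonempty
  apply not_linEquivEffective_orderDivisor ρ'
  rw [← hρ']
  exact LinEquivEffective.of_linEquiv (hmem f hf hfdeg) (hνf.symm.of_sub_eq (by abel))

end Consequences

/-- A divisor of degree `2g - 2` has rank at most `g - 1`, with equality iff it
is linearly equivalent to the canonical divisor. -/
theorem bnRank_degree_canonical {V : Type} [Fintype V] [DecidableEq V]
    (m : V → V → ℕ) (hsymm : ∀ u v, m u v = m v u) (hloop : ∀ v, m v v = 0)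
    (hconn : (assocGraph m).Connected)
    (d : V → ℤ) (hdeg : degDiv d = 2 * genus m - 2) :
    bnRank m d ≤ genus m - 1 ∧
      (bnRank m d = genus m - 1 ↔ LinEquiv m d (canonical m)) := by
  have hle : ∀ k ∈ bnRankSet m d, k ≤ genus m - 1 := fun _ =>
    le_genus_sub_one_of_mem_bnRankSet hsymm hloop hconn hdeg.le
  have hne : (bnRankSet m d).Nonempty := ⟨-1, .inl rfl⟩
  have hbdd : BddAbove (bnRankSet m d) := ⟨genus m - 1, hle⟩
  refine ⟨csSup_le hne hle, fun h => ?_, fun hK => ?_⟩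
  · exact linEquiv_canonical_of_genus_sub_one_mem_bnRankSet hsymm hloop hconn hdeg
      (h ▸ Int.csSup_mem hne hbdd)
  · exact (csSup_le hne hle).antisymm
      (le_csSup hbdd (genus_sub_one_mem_bnRankSet hsymm hloop hconn hK))
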